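/- Let I be an ideal of a ring R and n ∈ ℕ. Then R/I is strongly periodic if and only if R/I^n is strongly periodic. -/

import Mathlib

/-- A two-sided ideal `P` is prime if it is proper and `aRb ⊆ P` implies `a ∈ P` or `b ∈ P`. -/
def TwoSidedIdeal.IsPrime {R : Type*} [Ring R] (P : TwoSidedIdeal R) : Prop :=
  (P : Set R) ≠ Set.univ ∧ ∀ a b : R, (∀ r : R, a * r * b ∈ P) → a ∈ P ∨ b ∈ P

/-- The prime radical `P(R)`: the intersection of all prime (two-sided) ideals of `R`. -/
def primeRadical (R : Type*) [Ring R] : TwoSidedIdeal R :=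
  sInf {P : TwoSidedIdeal R | P.IsPrime}

/-- A ring is strongly periodic iff for every `a` there is `m ≥ 2` with `a - a ^ m ∈ P(R)`. -/
def StronglyPeriodicRing (R : Type*) [Ring R] : Prop :=
  ∀ a : R, ∃ m : ℕ, 2 ≤ m ∧ a - a ^ m ∈ primeRadical R

/-- The `n`-th power of a two-sided ideal: the ideal generated by products of `n` elements. -/
def TwoSidedIdeal.pow {R : Type*} [Ring R] (I : TwoSidedIdeal R) (n : ℕ) : TwoSidedIdeal R :=
  TwoSidedIdeal.span {x | ∃ f : Fin n → R, (∀ i, f i ∈ I) ∧ (List.ofFn f).prod = x}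

/-! The prime radical of `R ⧸ J` pulls back to the intersection of the prime ideals of `R`
containing `J`, so whether `R ⧸ J` is strongly periodic depends only on which primes contain `J`.
A prime contains `I ^ n` (for `n ≠ 0`) exactly when it contains `I`: if `a ∈ I \ P`, primeness
produces products `a r₁ a r₂ ⋯ a` of every length lying outside `P`. -/

namespace TwoSidedIdeal

variable {R S : Type*} [Ring R] [Ring S]

lemma coe_ne_univ_iff_one_notMem (I : TwoSidedIdeal R) :
    (I : Set R) ≠ Set.univ ↔ (1 : R) ∉ I := by
  rw [one_mem_iff, ← coe_top, Ne, SetLike.coe_set_eq]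

lemma IsPrime.one_notMem {P : TwoSidedIdeal R} (hP : P.IsPrime) : (1 : R) ∉ P :=
  (coe_ne_univ_iff_one_notMem P).1 hP.1

lemma isPrime_comap_iff {f : R →+* S} (hf : Function.Surjective f) (Q : TwoSidedIdeal S) :
    (Q.comap f).IsPrime ↔ Q.IsPrime := by
  simp only [IsPrime, coe_ne_univ_iff_one_notMem, mem_comap, map_one, map_mul, hf.forall]

lemma ker_le_comap (f : R →+* S) (Q : TwoSidedIdeal S) : ker f ≤ Q.comap f := fun x hx => by
  rw [mem_comap, (mem_ker f).1 hx]
  exact Q.zero_mem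

lemma comap_mk'_ker_ringCon_map {J P : TwoSidedIdeal R} (h : J ≤ P) :
    (ker (J.ringCon.map P.ringCon (ringCon_le_iff.1 h))).comap J.ringCon.mk' = P := by
  ext x
  rw [mem_comap, mem_ker]
  change P.ringCon.mk' x = 0 ↔ x ∈ P
  rw [← mem_ker, ker_ringCon_mk']

lemma mk'_mem_primeRadical_iff (J : TwoSidedIdeal R) (x : R) :
    J.ringCon.mk' x ∈ primeRadical J.ringCon.Quotient ↔
      ∀ P : TwoSidedIdeal R, P.IsPrime → J ≤ P → x ∈ P := by
  have hmk := J.ringCon.mk'_surjective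
  rw [primeRadical, mem_sInf]
  constructor
  · intro hx P hP hJP
    rw [← comap_mk'_ker_ringCon_map hJP] at hP ⊢
    exact (mem_comap _).2 (hx _ ((isPrime_comap_iff hmk _).1 hP))
  · intro hx Q hQ
    have hJQ : J ≤ Q.comap J.ringCon.mk' := by
      simpa only [ker_ringCon_mk'] using ker_le_comap J.ringCon.mk' Q
    exact (mem_comap _).1 (hx _ ((isPrime_comap_iff hmk Q).2 hQ) hJQ)

lemma stronglyPeriodicRing_quotient_iff (J : TwoSidedIdeal R) :
    StronglyPeriodicRing J.ringCon.Quotient ↔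
      ∀ x : R, ∃ m : ℕ, 2 ≤ m ∧ ∀ P : TwoSidedIdeal R, P.IsPrime → J ≤ P → x - x ^ m ∈ P := by
  simp only [StronglyPeriodicRing, J.ringCon.mk'_surjective.forall, ← map_pow, ← map_sub,
    mk'_mem_primeRadical_iff]

lemma stronglyPeriodicRing_quotient_congr {J K : TwoSidedIdeal R}
    (h : ∀ P : TwoSidedIdeal R, P.IsPrime → (J ≤ P ↔ K ≤ P)) :
    StronglyPeriodicRing J.ringCon.Quotient ↔ StronglyPeriodicRing K.ringCon.Quotient := by
  simp only [stronglyPeriodicRing_quotient_iff]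
  exact forall_congr' fun x => exists_congr fun m => and_congr_right' <|
    forall_congr' fun P => forall_congr' fun hP => imp_congr_left (h P hP)

lemma pow_le_self (I : TwoSidedIdeal R) {n : ℕ} (hn : n ≠ 0) : I.pow n ≤ I := by
  obtain ⟨k, rfl⟩ := Nat.exists_eq_succ_of_ne_zero hn
  refine span_le.2 ?_
  rintro _ ⟨f, hf, rfl⟩
  rw [List.ofFn_succ, List.prod_cons]
  exact I.mul_mem_right _ _ (hf 0)

lemma IsPrime.exists_prod_notMem {P I : TwoSidedIdeal R} (hP : P.IsPrime) {a : R} (haI : a ∈ I)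
    (haP : a ∉ P) (n : ℕ) : ∃ f : Fin n → R, (∀ i, f i ∈ I) ∧ (List.ofFn f).prod ∉ P := by
  induction n with
  | zero => exact ⟨Fin.elim0, fun i => i.elim0, by simpa using hP.one_notMem⟩
  | succ n ih =>
    obtain ⟨f, hfI, hfP⟩ := ih
    obtain ⟨r, hr⟩ : ∃ r, a * r * (List.ofFn f).prod ∉ P := by
      by_contra! H
      exact (hP.2 _ _ H).elim haP hfP
    refine ⟨Fin.cons (a * r) f, Fin.cases (I.mul_mem_right _ _ haI) hfI, ?_⟩
    simpa [List.ofFn_succ] using hr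

lemma IsPrime.le_of_pow_le {P I : TwoSidedIdeal R} (hP : P.IsPrime) {n : ℕ} (h : I.pow n ≤ P) :
    I ≤ P := fun a haI => by
  by_contra haP
  obtain ⟨f, hfI, hfP⟩ := hP.exists_prod_notMem haI haP n
  exact hfP (h (subset_span ⟨f, hfI, rfl⟩))

lemma IsPrime.pow_le_iff {P : TwoSidedIdeal R} (hP : P.IsPrime) (I : TwoSidedIdeal R) {n : ℕ}
    (hn : n ≠ 0) : I.pow n ≤ P ↔ I ≤ P :=
  ⟨hP.le_of_pow_le, (I.pow_le_self hn).trans⟩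

end TwoSidedIdeal

theorem quotient_stronglyPeriodic_iff_quotient_pow {R : Type*} [Ring R]
    (I : TwoSidedIdeal R) (n : ℕ) (hn : 0 < n) :
    StronglyPeriodicRing I.ringCon.Quotient ↔
      StronglyPeriodicRing (I.pow n).ringCon.Quotient :=
  TwoSidedIdeal.stronglyPeriodicRing_quotient_congr fun _ hP => (hP.pow_le_iff I hn.ne').symm
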